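/- arXiv:1911.03953 — 2 statements merged into one kernel-verified Lean document; each statement's English description precedes it below -/
import Mathlib

section
/- For a Beltrami wave W(x) = Σ_{k∈Λ} a_k W_k(x) with Λ = -Λ ⊂ S^2 ∩ Q^3, conjugation condition ā_k = a_{-k}, and W_k(x) = (1/√2)(k1 + i k2)e^{iλk·x}, the average of W ⊗ W over T^3 equals (1/2) Σ_{k∈Λ} |a_k|^2 (Id − k⊗k). -/
open MeasureTheory Real Matrix

noncomputable def pd (j : Fin 3) (f : (Fin 3 → ℝ) → ℝ) (x : Fin 3 → ℝ) : ℝ :=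
  fderiv ℝ f x (Pi.single j 1)

noncomputable def curl (V : (Fin 3 → ℝ) → (Fin 3 → ℝ)) (x : Fin 3 → ℝ) : Fin 3 → ℝ :=
  ![pd 1 (fun y => V y 2) x - pd 2 (fun y => V y 1) x,
    pd 2 (fun y => V y 0) x - pd 0 (fun y => V y 2) x,
    pd 0 (fun y => V y 1) x - pd 1 (fun y => V y 0) x]

noncomputable def divg (V : (Fin 3 → ℝ) → (Fin 3 → ℝ)) (x : Fin 3 → ℝ) : ℝ :=
  ∑ j : Fin 3, pd j (fun y => V y j) x

def Torus3 : Set (Fin 3 → ℝ) := Set.univ.pi fun _ => Set.Icc 0 (2 * π)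

def PeriodicField (V : (Fin 3 → ℝ) → (Fin 3 → ℝ)) : Prop :=
  ∀ (x : Fin 3 → ℝ) (j : Fin 3), V (x + Pi.single j (2 * π)) = V x

/-!
Expanding `W i * W j` gives a double sum over pairs `(k, k')` of plane waves with frequency
`λ (k + k')`, an integer vector, whose torus average vanishes unless `k' = -k`. A surviving term is
`a k * a (-k) = |a k|²` times `½ (k1 + i k2)_i (k1 - i k2)_j`: its imaginary part is odd in `k` and
cancels over `Λ = -Λ`, and its real part `k1 ⊗ k1 + k2 ⊗ k2` is `Id - k ⊗ k` because
`(k, k1, k × k1)` is an orthonormal frame.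
-/

theorem integral_Icc_zero_two_pi_exp_int_mul_I (m : ℤ) :
    ∫ t in Set.Icc (0 : ℝ) (2 * π), Complex.exp (Complex.I * m * t)
      = if m = 0 then ((2 * π : ℝ) : ℂ) else 0 := by
  rw [integral_Icc_eq_integral_Ioc, ← intervalIntegral.integral_of_le (by positivity)]
  split_ifs with hm
  · simp [hm]
  · have hc : Complex.I * m ≠ 0 := mul_ne_zero Complex.I_ne_zero (by exact_mod_cast hm)
    have hper : Complex.I * m * ((2 * π : ℝ) : ℂ) = m * (2 * π * Complex.I) := by
      push_cast; ring
    rw [integral_exp_mul_complex hc, hper, Complex.exp_int_mul_two_pi_mul_I]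
    simp

theorem setIntegral_univ_pi_prod {ι : Type*} [Fintype ι] (s : ι → Set ℝ) (f : ι → ℝ → ℂ) :
    ∫ x in Set.univ.pi s, ∏ i, f i (x i) = ∏ i, ∫ t in s i, f i t := by
  rw [volume_pi, Measure.restrict_pi_pi, integral_fintype_prod_eq_prod]

theorem setIntegral_torus_exp_dotProduct {ι : Type*} [Fintype ι] (u : ι → ℝ)
    (hu : ∀ i, ∃ m : ℤ, u i = m) :
    ∫ x in Set.univ.pi fun _ => Set.Icc 0 (2 * π), Complex.exp (Complex.I * ((u ⬝ᵥ x : ℝ) : ℂ))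
      = if u = 0 then (((2 * π) ^ Fintype.card ι : ℝ) : ℂ) else 0 := by
  choose m hm using hu
  have hprod : ∀ x : ι → ℝ, Complex.exp (Complex.I * ((u ⬝ᵥ x : ℝ) : ℂ))
      = ∏ i, Complex.exp (Complex.I * m i * x i) := by
    intro x
    simp only [← Complex.exp_sum, dotProduct, hm, Complex.ofReal_sum, Complex.ofReal_mul,
      Complex.ofReal_intCast, Finset.mul_sum, mul_assoc]
  have hu0 : u = 0 ↔ ∀ i, m i = 0 := by
    simp only [funext_iff, hm, Pi.zero_apply, Int.cast_eq_zero]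
  simp_rw [hprod]
  rw [setIntegral_univ_pi_prod _ fun i t => Complex.exp (Complex.I * m i * t)]
  simp_rw [integral_Icc_zero_two_pi_exp_int_mul_I, Fintype.prod_ite_zero, hu0]
  simp

theorem setIntegral_torus_exp_smul_add_dotProduct {ι : Type*} [Fintype ι] {lam : ℝ}
    (hlam : lam ≠ 0) {k k' : ι → ℝ} (hk : ∀ i, ∃ n : ℤ, lam * k i = n)
    (hk' : ∀ i, ∃ n : ℤ, lam * k' i = n) :
    ∫ x in Set.univ.pi fun _ => Set.Icc 0 (2 * π),
        Complex.exp (Complex.I * (((lam • (k + k')) ⬝ᵥ x : ℝ) : ℂ))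
      = if k' = -k then (((2 * π) ^ Fintype.card ι : ℝ) : ℂ) else 0 := by
  have hfreq : ∀ i, ∃ m : ℤ, (lam • (k + k')) i = m := by
    intro i
    obtain ⟨m, hm⟩ := hk i
    obtain ⟨m', hm'⟩ := hk' i
    exact ⟨m + m', by simp [mul_add, hm, hm']⟩
  have hzero : lam • (k + k') = 0 ↔ k' = -k := by
    rw [smul_eq_zero, or_iff_right hlam, add_eq_zero_iff_eq_neg']
  rw [setIntegral_torus_exp_dotProduct _ hfreq]
  simp only [hzero]

theorem setIntegral_torus_sum_exp_mul_sum_exp {ι : Type*} [Fintype ι] (Λ : Finset (ι → ℝ))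
    (hsym : ∀ k ∈ Λ, -k ∈ Λ) {lam : ℝ} (hlam : lam ≠ 0)
    (hint : ∀ k ∈ Λ, ∀ i, ∃ n : ℤ, lam * k i = n) (c d : (ι → ℝ) → ℂ) :
    ∫ x in Set.univ.pi fun _ => Set.Icc 0 (2 * π),
        (∑ k ∈ Λ, c k * Complex.exp (Complex.I * lam * ((k ⬝ᵥ x : ℝ) : ℂ)))
          * ∑ k ∈ Λ, d k * Complex.exp (Complex.I * lam * ((k ⬝ᵥ x : ℝ) : ℂ))
      = (((2 * π) ^ Fintype.card ι : ℝ) : ℂ) * ∑ k ∈ Λ, c k * d (-k) := by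
  set T : Set (ι → ℝ) := Set.univ.pi fun _ => Set.Icc 0 (2 * π)
  have hexp : ∀ k k' x : ι → ℝ, Complex.exp (Complex.I * lam * ((k ⬝ᵥ x : ℝ) : ℂ))
      * Complex.exp (Complex.I * lam * ((k' ⬝ᵥ x : ℝ) : ℂ))
      = Complex.exp (Complex.I * (((lam • (k + k')) ⬝ᵥ x : ℝ) : ℂ)) := by
    intro k k' x
    rw [← Complex.exp_add, smul_dotProduct, add_dotProduct, smul_eq_mul]
    congr 1
    push_cast
    ring
  have hintegrable : ∀ v : ι → ℝ,
      IntegrableOn (fun x => Complex.exp (Complex.I * ((v ⬝ᵥ x : ℝ) : ℂ))) T := fun v =>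
    ContinuousOn.integrableOn_compact (isCompact_univ_pi fun _ => isCompact_Icc)
      (by fun_prop)
  calc _ = ∫ x in T, ∑ k ∈ Λ, ∑ k' ∈ Λ,
          c k * d k' * Complex.exp (Complex.I * (((lam • (k + k')) ⬝ᵥ x : ℝ) : ℂ)) := by
        congr with x
        rw [Finset.sum_mul_sum]
        congr! 2 with k _ k' _
        rw [← hexp]
        ring
    _ = ∑ k ∈ Λ, ∑ k' ∈ Λ,
          c k * d k' * ∫ x in T, Complex.exp (Complex.I * (((lam • (k + k')) ⬝ᵥ x : ℝ) : ℂ)) := by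
        rw [integral_finsetSum _ fun k _ =>
          integrable_finsetSum _ fun k' _ => (hintegrable _).const_mul _]
        refine Finset.sum_congr rfl fun k _ => ?_
        rw [integral_finsetSum _ fun k' _ => (hintegrable _).const_mul _]
        simp_rw [integral_const_mul]
    _ = ∑ k ∈ Λ, c k * d (-k) * (((2 * π) ^ Fintype.card ι : ℝ) : ℂ) := by
        refine Finset.sum_congr rfl fun k hk => ?_
        have hterm : ∀ k' ∈ Λ, c k * d k'
            * ∫ x in T, Complex.exp (Complex.I * (((lam • (k + k')) ⬝ᵥ x : ℝ) : ℂ))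
            = if k' = -k then c k * d k' * (((2 * π) ^ Fintype.card ι : ℝ) : ℂ) else 0 := by
          intro k' hk'
          rw [setIntegral_torus_exp_smul_add_dotProduct hlam (hint k hk) (hint k' hk'), mul_ite,
            mul_zero]
        rw [Finset.sum_congr rfl hterm, Finset.sum_ite_eq', if_pos (hsym k hk)]
    _ = _ := by rw [Finset.mul_sum]; simp_rw [mul_comm]

theorem Finset.sum_eq_zero_of_odd {V R : Type*} [InvolutiveNeg V] [Ring R] [CharZero R]
    [NoZeroDivisors R] {s : Finset V} (hs : ∀ k ∈ s, -k ∈ s) {f : V → R}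
    (hf : ∀ k ∈ s, f (-k) = -f k) :
    ∑ k ∈ s, f k = 0 := by
  have h : ∑ k ∈ s, f (-k) = ∑ k ∈ s, f k :=
    Finset.sum_nbij' (- ·) (- ·) hs hs (fun k _ => neg_neg k) (fun k _ => neg_neg k)
      (fun k _ => by simp)
  rw [Finset.sum_congr rfl hf, Finset.sum_neg_distrib] at h
  exact self_eq_neg.mp h.symm

theorem vecMulVec_add_vecMulVec_add_vecMulVec_cross_eq_one {R : Type*} [CommRing R]
    {k b : Fin 3 → R} (hk : k ⬝ᵥ k = 1) (hb : b ⬝ᵥ b = 1) (hkb : k ⬝ᵥ b = 0) :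
    vecMulVec k k + vecMulVec b b + vecMulVec (k ⨯₃ b) (k ⨯₃ b) = 1 := by
  -- `M` has orthonormal rows; the entries of `Mᵀ * M = 1` are the claim.
  let M : Matrix (Fin 3) (Fin 3) R := ![k, b, k ⨯₃ b]
  have hMMt : M * Mᵀ = 1 := by
    have hbk : b ⬝ᵥ k = 0 := by rwa [dotProduct_comm]
    ext r s
    change M r ⬝ᵥ M s = _
    fin_cases r <;> fin_cases s <;>
      simp [M, hk, hb, hkb, hbk, dot_self_cross, dot_cross_self, cross_dot_cross,
        dotProduct_comm (k ⨯₃ b)]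
  rw [← mul_eq_one_comm.mp hMMt]
  ext i j
  rw [Matrix.mul_apply, Fin.sum_univ_three]
  rfl

theorem mul_sqrt_half_mul_conj_mul_sqrt_half (z : ℂ) (p q p' q' : ℝ) :
    z * (((1 / √2 : ℝ) : ℂ) * (p + Complex.I * q))
        * (starRingEnd ℂ z * (((1 / √2 : ℝ) : ℂ) * (p' + Complex.I * ((-q' : ℝ) : ℂ))))
      = ((1 / 2 * ‖z‖ ^ 2 * (p * p' + q * q') : ℝ) : ℂ)
        + Complex.I * ((1 / 2 * ‖z‖ ^ 2 * (q * p' - p * q') : ℝ) : ℂ) := by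
  have hs : ((1 / √2 : ℝ) : ℂ) ^ 2 = 1 / 2 := by
    rw [← Complex.ofReal_pow, div_pow, Real.sq_sqrt zero_le_two]
    push_cast
    ring
  have hz := Complex.mul_conj' z
  generalize ((1 / √2 : ℝ) : ℂ) = s at hs ⊢
  push_cast
  linear_combination
    (s ^ 2 * (p + Complex.I * q) * (p' - Complex.I * q')) * hz
    + ((‖z‖ : ℂ) ^ 2 * (p + Complex.I * q) * (p' - Complex.I * q')) * hs
    - ((‖z‖ : ℂ) ^ 2 / 2 * q * q') * Complex.I_sq

noncomputable def beltramiCoeff {V ι : Type*} (a : V → ℂ) (k1 k2 : V → ι → ℝ) (k : V) (r : ι) : ℂ :=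
  a k * ((1 / √2 : ℝ) * ((k1 k r : ℂ) + Complex.I * (k2 k r : ℂ)))

theorem sum_beltramiCoeff_mul_beltramiCoeff_neg {V ι : Type*} [InvolutiveNeg V]
    {Λ : Finset V} (hsym : ∀ k ∈ Λ, -k ∈ Λ) {k1 k2 : V → ι → ℝ}
    (hframe : ∀ k ∈ Λ, k1 (-k) = k1 k ∧ k2 (-k) = -(k2 k)) {a : V → ℂ}
    (hconj : ∀ k ∈ Λ, a (-k) = starRingEnd ℂ (a k)) (i j : ι) :
    ∑ k ∈ Λ, beltramiCoeff a k1 k2 k i * beltramiCoeff a k1 k2 (-k) j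
      = ((1 / 2 * ∑ k ∈ Λ, ‖a k‖ ^ 2 * (k1 k i * k1 k j + k2 k i * k2 k j) : ℝ) : ℂ) := by
  have hterm : ∀ k ∈ Λ, beltramiCoeff a k1 k2 k i * beltramiCoeff a k1 k2 (-k) j
      = ((1 / 2 * ‖a k‖ ^ 2 * (k1 k i * k1 k j + k2 k i * k2 k j) : ℝ) : ℂ)
        + Complex.I * ((1 / 2 * ‖a k‖ ^ 2 * (k2 k i * k1 k j - k1 k i * k2 k j) : ℝ) : ℂ) := by
    intro k hk
    obtain ⟨h1, h2⟩ := hframe k hk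
    rw [← mul_sqrt_half_mul_conj_mul_sqrt_half, ← hconj k hk]
    simp only [beltramiCoeff, h1, h2, Pi.neg_apply]
  have hodd : ∑ k ∈ Λ, 1 / 2 * ‖a k‖ ^ 2 * (k2 k i * k1 k j - k1 k i * k2 k j) = 0 := by
    refine Finset.sum_eq_zero_of_odd hsym fun k hk => ?_
    obtain ⟨h1, h2⟩ := hframe k hk
    rw [hconj k hk, Complex.norm_conj, h1, h2, Pi.neg_apply, Pi.neg_apply]
    ring
  rw [Finset.sum_congr rfl hterm, Finset.sum_add_distrib, ← Finset.mul_sum, ← Complex.ofReal_sum,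
    ← Complex.ofReal_sum, hodd, Finset.mul_sum]
  simp only [Complex.ofReal_zero, mul_zero, add_zero, mul_assoc]

theorem stmt7_general (Λ : Finset (Fin 3 → ℝ))
    (hsphere : ∀ k ∈ Λ, ∑ i, (k i) ^ 2 = 1)
    (hsym : ∀ k ∈ Λ, -k ∈ Λ)
    (k1 k2 : (Fin 3 → ℝ) → (Fin 3 → ℝ))
    (hk1unit : ∀ k ∈ Λ, ∑ i, (k1 k i) ^ 2 = 1)
    (hk1orth : ∀ k ∈ Λ, k ⬝ᵥ k1 k = 0)
    (hk2 : ∀ k ∈ Λ, k2 k = crossProduct k (k1 k))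
    (hframe : ∀ k ∈ Λ, k1 (-k) = k1 k ∧ k2 (-k) = -(k2 k))
    (a : (Fin 3 → ℝ) → ℂ) (hconj : ∀ k ∈ Λ, a (-k) = starRingEnd ℂ (a k))
    (lam : ℕ) (hlam : 0 < lam) (hint : ∀ k ∈ Λ, ∀ i, ∃ n : ℤ, (lam : ℝ) * k i = n)
    (W : (Fin 3 → ℝ) → (Fin 3 → ℂ))
    (hW : ∀ x i, W x i = ∑ k ∈ Λ, a k * ((1 / Real.sqrt 2 : ℝ)
      * ((k1 k i : ℂ) + Complex.I * (k2 k i : ℂ))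
      * Complex.exp (Complex.I * (lam : ℂ) * ((k ⬝ᵥ x : ℝ) : ℂ)))) :
    ∀ i j, (((2 * π) ^ 3 : ℝ) : ℂ)⁻¹ * ∫ x in Torus3, W x i * W x j
      = (((1 / 2) * ∑ k ∈ Λ, ‖a k‖ ^ 2
          * ((if i = j then 1 else 0) - k i * k j) : ℝ) : ℂ) := by
  intro i j
  have hWexp : ∀ x r, W x r = ∑ k ∈ Λ, beltramiCoeff a k1 k2 k r
      * Complex.exp (Complex.I * ((lam : ℝ) : ℂ) * ((k ⬝ᵥ x : ℝ) : ℂ)) := by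
    intro x r
    simp only [hW, beltramiCoeff, Complex.ofReal_natCast, mul_assoc]
  have hframeId : ∀ k ∈ Λ,
      k1 k i * k1 k j + k2 k i * k2 k j = (if i = j then 1 else 0) - k i * k j := by
    intro k hk
    have hunit : ∀ v : Fin 3 → ℝ, ∑ i, v i ^ 2 = 1 → v ⬝ᵥ v = 1 := fun v hv => by
      simpa only [dotProduct, sq] using hv
    have := congrFun (congrFun (vecMulVec_add_vecMulVec_add_vecMulVec_cross_eq_one
      (hunit k (hsphere k hk)) (hunit _ (hk1unit k hk)) (hk1orth k hk)) i) j
    rw [← hk2 k hk] at this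
    simp only [Matrix.add_apply, vecMulVec_apply, Matrix.one_apply] at this
    linarith
  simp_rw [hWexp]
  rw [Torus3, setIntegral_torus_sum_exp_mul_sum_exp Λ hsym (by positivity) hint, Fintype.card_fin,
    inv_mul_cancel_left₀ (Complex.ofReal_ne_zero.mpr (by positivity)),
    sum_beltramiCoeff_mul_beltramiCoeff_neg hsym hframe hconj]
  congr 2
  exact Finset.sum_congr rfl fun k hk => by rw [hframeId k hk]

/-- For a Beltrami wave W = Σ_{k∈Λ} a_k W_k with Λ = −Λ ⊂ S²∩ℚ³, ā_k = a_{−k} and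
W_k = (1/√2)(k1+ik2)e^{iλk·x}, the average of W ⊗ W over T³ is
(1/2) Σ_{k∈Λ} |a_k|² (Id − k⊗k). -/
theorem stmt7 (Λ : Finset (Fin 3 → ℝ))
    (hsphere : ∀ k ∈ Λ, ∑ i, (k i) ^ 2 = 1)
    (hrat : ∀ k ∈ Λ, ∀ i, ∃ q : ℚ, k i = (q : ℝ))
    (hsym : ∀ k ∈ Λ, -k ∈ Λ)
    (k1 k2 : (Fin 3 → ℝ) → (Fin 3 → ℝ))
    (hk1unit : ∀ k ∈ Λ, ∑ i, (k1 k i) ^ 2 = 1)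
    (hk1orth : ∀ k ∈ Λ, k ⬝ᵥ k1 k = 0)
    (hk2 : ∀ k ∈ Λ, k2 k = crossProduct k (k1 k))
    (hframe : ∀ k ∈ Λ, k1 (-k) = k1 k ∧ k2 (-k) = -(k2 k))
    (a : (Fin 3 → ℝ) → ℂ) (hconj : ∀ k ∈ Λ, a (-k) = starRingEnd ℂ (a k))
    (lam : ℕ) (hlam : 0 < lam) (hint : ∀ k ∈ Λ, ∀ i, ∃ n : ℤ, (lam : ℝ) * k i = n)
    (W : (Fin 3 → ℝ) → (Fin 3 → ℂ))
    (hW : ∀ x i, W x i = ∑ k ∈ Λ, a k * ((1 / Real.sqrt 2 : ℝ)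
      * ((k1 k i : ℂ) + Complex.I * (k2 k i : ℂ))
      * Complex.exp (Complex.I * (lam : ℂ) * ((k ⬝ᵥ x : ℝ) : ℂ)))) :
    ∀ i j, (((2 * π) ^ 3 : ℝ) : ℂ)⁻¹ * ∫ x in Torus3, W x i * W x j
      = (((1 / 2) * ∑ k ∈ Λ, ‖a k‖ ^ 2
          * ((if i = j then 1 else 0) - k i * k j) : ℝ) : ℂ) :=
  stmt7_general Λ hsphere hsym k1 k2 hk1unit hk1orth hk2 hframe a hconj lam hlam hint W hW
end

section
/- Define the symmetric traceless matrix field R_0(x) = (1/(λ_0^2 (2π)^3)) [[0, sin(λ_0 x_1), cos(λ_0 x_1)],[sin(λ_0 x_1), 0, 0],[cos(λ_0 x_1), 0, 0]]. Then ∇·R_0 = ∂_t A_0, i.e., the triple (A_0, B_0, R_0) with B_0 = ∇×A_0 solves ∂_t A_0 + (∇×B_0)×B_0 = ∇·R_0. -/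
open MeasureTheory Real Matrix

/-! The field `A₀` is `t / (λ₀ (2π)³) • helix (λ₀ x₁)`, and `helix (a x₁)` is a Beltrami field:
its curl is `a` times itself. Hence `B₀ = λ₀ A₀` and `∇ × B₀ = λ₀ B₀` is parallel to `B₀`, so the
Lorentz term vanishes. Only `x₁`-derivatives survive in `∇ · R₀`, which gives
`∇ · (c • stress (a x₁)) = c a • helix (a x₁)`; with `c = 1 / (λ₀² (2π)³)` this is `∂ₜ A₀`. -/

lemma pd_const (c : ℝ) (j : Fin 3) (x : Fin 3 → ℝ) : pd j (fun _ => c) x = 0 := by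
  simp [pd]

lemma pd_neg (f : (Fin 3 → ℝ) → ℝ) (j : Fin 3) (x : Fin 3 → ℝ) :
    pd j (fun y => -f y) x = -pd j f x := by
  simp [pd]

lemma pd_comp_apply {g : ℝ → ℝ} {g' : ℝ} (j k : Fin 3) (x : Fin 3 → ℝ)
    (hg : HasDerivAt g g' (x k)) : pd j (fun y => g (y k)) x = if j = k then g' else 0 := by
  have hfd : HasFDerivAt (fun y => g (y k)) (g' • ContinuousLinearMap.proj k) x :=
    hg.comp_hasFDerivAt x (hasFDerivAt_apply (𝕜 := ℝ) k x)
  rw [pd, hfd.fderiv]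
  rcases eq_or_ne j k with rfl | h
  · simp
  · simp [h, h.symm]

lemma pd_const_mul_sin (c a : ℝ) (j k : Fin 3) (x : Fin 3 → ℝ) :
    pd j (fun y => c * sin (a * y k)) x = if j = k then c * (cos (a * x k) * a) else 0 :=
  pd_comp_apply j k x (((hasDerivAt_id _).const_mul a).sin.const_mul c |>.congr_deriv (by simp))

lemma pd_const_mul_cos (c a : ℝ) (j k : Fin 3) (x : Fin 3 → ℝ) :
    pd j (fun y => c * cos (a * y k)) x = if j = k then c * (-sin (a * x k) * a) else 0 :=
  pd_comp_apply j k x (((hasDerivAt_id _).const_mul a).cos.const_mul c |>.congr_deriv (by simp))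

noncomputable def helix (θ : ℝ) : Fin 3 → ℝ := ![0, cos θ, -sin θ]

noncomputable def stress (θ : ℝ) : Matrix (Fin 3) (Fin 3) ℝ :=
  ![![0, sin θ, cos θ], ![sin θ, 0, 0], ![cos θ, 0, 0]]

lemma curl_smul_helix (r a : ℝ) (x : Fin 3 → ℝ) :
    curl (fun y => r • helix (a * y 0)) x = (r * a) • helix (a * x 0) := by
  ext i
  fin_cases i <;> simp [curl, helix, pd_const, pd_neg, pd_const_mul_sin, pd_const_mul_cos] <;> ring

lemma cross_curl_self_eq_zero {V : (Fin 3 → ℝ) → (Fin 3 → ℝ)} {x : Fin 3 → ℝ} {a : ℝ}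
    (hV : curl V x = a • V x) : crossProduct (curl V x) (V x) = 0 := by
  rw [hV, map_smul, LinearMap.smul_apply, cross_self, smul_zero]

lemma stress_isSymm (θ : ℝ) : (stress θ).IsSymm := by
  ext i j
  fin_cases i <;> fin_cases j <;> rfl

lemma stress_trace (θ : ℝ) : (stress θ).trace = 0 := by
  simp [stress, Matrix.trace, Matrix.diag, Fin.sum_univ_three]

lemma sum_pd_smul_stress (c a : ℝ) (x : Fin 3 → ℝ) (i : Fin 3) :
    ∑ j, pd j (fun y => (c • stress (a * y 0)) i j) x = (c * a) • helix (a * x 0) i := by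
  have hentry : ∀ i j, (fun y : Fin 3 → ℝ => (c • stress (a * y 0)) i j) =
      fun y => c * stress (a * y 0) i j := fun _ _ => rfl
  simp only [hentry]
  fin_cases i <;>
    simp [Fin.sum_univ_three, stress, helix, pd_const, pd_const_mul_sin, pd_const_mul_cos] <;> ring

lemma one_div_sq_mul_mul_cancel (a K : ℝ) : 1 / (a ^ 2 * K) * a = 1 / (a * K) := by
  rcases eq_or_ne a 0 with rfl | ha
  · simp
  · field_simp

theorem stmt11_general (lam0 : ℕ)
    (A0 : ℝ → (Fin 3 → ℝ) → (Fin 3 → ℝ))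
    (hA0 : ∀ t x, A0 t x = (t / ((lam0 : ℝ) * (2 * π) ^ 3))
      • ![0, Real.cos ((lam0 : ℝ) * x 0), -Real.sin ((lam0 : ℝ) * x 0)])
    (B0 : ℝ → (Fin 3 → ℝ) → (Fin 3 → ℝ))
    (hB0 : ∀ t x, B0 t x = curl (A0 t) x)
    (R0 : (Fin 3 → ℝ) → Matrix (Fin 3) (Fin 3) ℝ)
    (hR0 : ∀ x, R0 x = (1 / ((lam0 : ℝ) ^ 2 * (2 * π) ^ 3))
      • ![![0, Real.sin ((lam0 : ℝ) * x 0), Real.cos ((lam0 : ℝ) * x 0)],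
          ![Real.sin ((lam0 : ℝ) * x 0), 0, 0],
          ![Real.cos ((lam0 : ℝ) * x 0), 0, 0]]) :
    (∀ x, (R0 x).IsSymm ∧ Matrix.trace (R0 x) = 0) ∧
    (∀ t x i, deriv (fun s => A0 s x i) t
        + crossProduct (curl (B0 t) x) (B0 t x) i
        = ∑ j, pd j (fun y => R0 y i j) x) := by
  set a : ℝ := (lam0 : ℝ)
  set K : ℝ := (2 * π) ^ 3
  have hA : ∀ t x, A0 t x = (t / (a * K)) • helix (a * x 0) := hA0
  have hR : R0 = fun x => (1 / (a ^ 2 * K)) • stress (a * x 0) := funext hR0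
  have hB : ∀ t, B0 t = fun x => (t / (a * K) * a) • helix (a * x 0) := fun t => by
    ext1 x; rw [hB0, funext (hA t), curl_smul_helix]
  refine ⟨fun x => ⟨?_, ?_⟩, fun t x i => ?_⟩
  · rw [hR]; exact (stress_isSymm _).smul _
  · rw [hR, trace_smul, stress_trace, smul_zero]
  · have hcurlB : curl (B0 t) x = a • B0 t x := by
      rw [hB, curl_smul_helix, smul_smul]
      ring_nf
    rw [cross_curl_self_eq_zero hcurlB, hR, sum_pd_smul_stress, one_div_sq_mul_mul_cancel]
    simp [hA]

/-- R₀(x) = (1/(λ₀²(2π)³))[[0,sin(λ₀x₁),cos(λ₀x₁)],[sin(λ₀x₁),0,0],[cos(λ₀x₁),0,0]] is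
symmetric and traceless, and (A₀,B₀,R₀) with B₀ = ∇×A₀ solves
∂ₜA₀ + (∇×B₀)×B₀ = ∇·R₀. -/
theorem stmt11 (lam0 : ℕ) (hlam0 : 0 < lam0)
    (A0 : ℝ → (Fin 3 → ℝ) → (Fin 3 → ℝ))
    (hA0 : ∀ t x, A0 t x = (t / ((lam0 : ℝ) * (2 * π) ^ 3))
      • ![0, Real.cos ((lam0 : ℝ) * x 0), -Real.sin ((lam0 : ℝ) * x 0)])
    (B0 : ℝ → (Fin 3 → ℝ) → (Fin 3 → ℝ))
    (hB0 : ∀ t x, B0 t x = curl (A0 t) x)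
    (R0 : (Fin 3 → ℝ) → Matrix (Fin 3) (Fin 3) ℝ)
    (hR0 : ∀ x, R0 x = (1 / ((lam0 : ℝ) ^ 2 * (2 * π) ^ 3))
      • ![![0, Real.sin ((lam0 : ℝ) * x 0), Real.cos ((lam0 : ℝ) * x 0)],
          ![Real.sin ((lam0 : ℝ) * x 0), 0, 0],
          ![Real.cos ((lam0 : ℝ) * x 0), 0, 0]]) :
    (∀ x, (R0 x).IsSymm ∧ Matrix.trace (R0 x) = 0) ∧
    (∀ t x i, deriv (fun s => A0 s x i) t
        + crossProduct (curl (B0 t) x) (B0 t x) i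
        = ∑ j, pd j (fun y => R0 y i j) x) :=
  stmt11_general lam0 A0 hA0 B0 hB0 R0 hR0
end
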